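/- Let Σγ be a positive semidefinite p₂×p₂ real matrix, Σε and Σε′ positive definite error covariance matrices of sizes k×k and k′×k′ respectively, and F₂ (k×p₂) and F₂′ (k′×p₂) time-plan design matrices of rank p₂. Set M₂ = F₂ᵀ (F₂ Σγ F₂ᵀ + Σε)⁻¹ F₂ and M₂′ = F₂′ᵀ (F₂′ Σγ F₂′ᵀ + Σε′)⁻¹ F₂′. Then for every vector f ∈ ℝ^{p₂}: fᵀ (F₂ᵀ Σε⁻¹ F₂)⁻¹ f ≤ fᵀ (F₂′ᵀ Σε′⁻¹ F₂′)⁻¹ f if and only if fᵀ M₂⁻¹ f ≤ fᵀ M₂′⁻¹ f. In particular, a time plan that is c-optimal for extrapolation at t₀.₅ in the marginal fixed effect model (i.e. minimizes f₂(t₀.₅)ᵀ (F₂ᵀ Σε⁻¹ F₂)⁻¹ f₂(t₀.₅)) also minimizes f₂(t₀.₅)ᵀ M₂⁻¹ f₂(t₀.₅), the design-dependent part of the asymptotic variance of the estimator of the median failure time. -/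

import Mathlib

/-!
With `B = F₂ᵀ Σε⁻¹ F₂` and `V = F₂ Σγ F₂ᵀ + Σε` one has `V Σε⁻¹ F₂ B⁻¹ = F₂ (B⁻¹ + Σγ)`, hence
`F₂ᵀ V⁻¹ F₂ (B⁻¹ + Σγ) = B B⁻¹ = 1`, i.e. `M₂⁻¹ = (F₂ᵀ Σε⁻¹ F₂)⁻¹ + Σγ`. So both sides of each
comparison differ only by the plan-independent term `fᵀ Σγ f`, which cancels.
-/

open Matrix

namespace Matrix

variable {m n : Type*} [Fintype n]

theorem mulVec_injective_of_rank_eq_card {K : Type*} [Field K] {A : Matrix m n K}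
    (hA : A.rank = Fintype.card n) : Function.Injective A.mulVec := by
  have h := LinearMap.finrank_range_add_finrank_ker A.mulVecLin
  rwa [← rank, hA, Module.finrank_fintype_fun_eq_card, Nat.add_eq_left,
    Submodule.finrank_eq_zero, LinearMap.ker_eq_bot] at h

variable [Fintype m] [DecidableEq m] [DecidableEq n]

theorem inv_transpose_mul_inv_mul_add_eq {R : Type*} [CommRing R]
    (Sγ : Matrix n n R) (Sε : Matrix m m R) (F : Matrix m n R) (hε : IsUnit Sε.det)
    (hB : IsUnit (Fᵀ * Sε⁻¹ * F).det) (hV : IsUnit (F * Sγ * Fᵀ + Sε).det) :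
    (Fᵀ * (F * Sγ * Fᵀ + Sε)⁻¹ * F)⁻¹ = (Fᵀ * Sε⁻¹ * F)⁻¹ + Sγ := by
  set B := Fᵀ * Sε⁻¹ * F
  set V := F * Sγ * Fᵀ + Sε
  have hVF : V * (Sε⁻¹ * F * B⁻¹) = F * (B⁻¹ + Sγ) := by
    calc V * (Sε⁻¹ * F * B⁻¹) = F * Sγ * (B * B⁻¹) + Sε * Sε⁻¹ * F * B⁻¹ := by
          simp only [V, B, Matrix.add_mul, Matrix.mul_assoc]
      _ = F * (B⁻¹ + Sγ) := by
          rw [mul_nonsing_inv _ hB, mul_nonsing_inv _ hε, Matrix.mul_add, add_comm]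
          simp only [Matrix.mul_one, Matrix.one_mul]
  refine inv_eq_right_inv ?_
  calc Fᵀ * V⁻¹ * F * (B⁻¹ + Sγ) = Fᵀ * (V⁻¹ * V) * (Sε⁻¹ * F * B⁻¹) := by
        simp only [← hVF, Matrix.mul_assoc]
    _ = B * B⁻¹ := by
        rw [nonsing_inv_mul _ hV, Matrix.mul_one]
        simp only [B, Matrix.mul_assoc]
    _ = 1 := mul_nonsing_inv _ hB

theorem inv_transpose_mul_inv_mul_add_eq_of_posDef {Sγ : Matrix n n ℝ} {Sε : Matrix m m ℝ}
    {F : Matrix m n ℝ} (hγ : Sγ.PosSemidef) (hε : Sε.PosDef) (hF : Function.Injective F.mulVec) :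
    (Fᵀ * (F * Sγ * Fᵀ + Sε)⁻¹ * F)⁻¹ = (Fᵀ * Sε⁻¹ * F)⁻¹ + Sγ := by
  have hB : (Fᵀ * Sε⁻¹ * F).PosDef := by
    simpa using hε.inv.conjTranspose_mul_mul_same hF
  have hV : (F * Sγ * Fᵀ + Sε).PosDef := by
    simpa using PosDef.posSemidef_add (hγ.mul_mul_conjTranspose_same F) hε
  exact inv_transpose_mul_inv_mul_add_eq Sγ Sε F hε.det_pos.ne'.isUnit hB.det_pos.ne'.isUnit
    hV.det_pos.ne'.isUnit

end Matrix

/-- Proposition 1: comparison of two time plans.  The `c`-criterion in the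
marginal fixed effect model orders time plans in exactly the same way as the
design-dependent part of the asymptotic variance in the mixed effects model,
so a time plan that is `c`-optimal for extrapolation in the fixed effect model
also minimizes the asymptotic variance of the estimated median failure time. -/
theorem c_opt_fixed_iff_mixed {k k' p₂ : ℕ}
    (Sγ : Matrix (Fin p₂) (Fin p₂) ℝ)
    (Sε : Matrix (Fin k) (Fin k) ℝ) (Sε' : Matrix (Fin k') (Fin k') ℝ)
    (F₂ : Matrix (Fin k) (Fin p₂) ℝ) (F₂' : Matrix (Fin k') (Fin p₂) ℝ)
    (hγ : Sγ.PosSemidef) (hε : Sε.PosDef) (hε' : Sε'.PosDef)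
    (hF : F₂.rank = p₂) (hF' : F₂'.rank = p₂)
    (M₂ : Matrix (Fin p₂) (Fin p₂) ℝ)
    (hM : M₂ = F₂ᵀ * (F₂ * Sγ * F₂ᵀ + Sε)⁻¹ * F₂)
    (M₂' : Matrix (Fin p₂) (Fin p₂) ℝ)
    (hM' : M₂' = F₂'ᵀ * (F₂' * Sγ * F₂'ᵀ + Sε')⁻¹ * F₂') :
    ∀ f : Fin p₂ → ℝ,
      (f ⬝ᵥ ((F₂ᵀ * Sε⁻¹ * F₂)⁻¹ *ᵥ f) ≤ f ⬝ᵥ ((F₂'ᵀ * Sε'⁻¹ * F₂')⁻¹ *ᵥ f)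
        ↔ f ⬝ᵥ (M₂⁻¹ *ᵥ f) ≤ f ⬝ᵥ (M₂'⁻¹ *ᵥ f)) := by
  intro f
  have hinj := mulVec_injective_of_rank_eq_card (hF.trans (Fintype.card_fin p₂).symm)
  have hinj' := mulVec_injective_of_rank_eq_card (hF'.trans (Fintype.card_fin p₂).symm)
  rw [hM, hM', inv_transpose_mul_inv_mul_add_eq_of_posDef hγ hε hinj,
    inv_transpose_mul_inv_mul_add_eq_of_posDef hγ hε' hinj', add_mulVec, add_mulVec,
    dotProduct_add, dotProduct_add, add_le_add_iff_right]
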